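/- arXiv:0705.3356 — 4 statements merged into one kernel-verified Lean document; each statement's English description precedes it below -/
import Mathlib

section
/- Let F be a linearly ordered field with integer part I and let α, β ∈ F with α > β ≥ 2. Then N_β \ N_α is nonempty. -/
/-!
Put `n = ⌊1/(α - β)⌋ + 1`, the least `n` with `n(α - β) > 1`. If `⌊nβ⌋ = ⌊mα⌋`, then
`⌊mα⌋ ≤ nβ < nα - 1 < ⌊nα⌋` forces `m < n`, i.e. `m ≤ n - 1`. But then
`mα ≤ (n - 1)α ≤ (n - 1)β + 1 = nβ - β + 1 ≤ nβ - 1 < ⌊nβ⌋`, using `β ≥ 2`.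
-/

/-- `N_α`: the set `{⌊n·α⌋ : n ∈ I, n ≥ 0}`, where `fl` is the floor function
associated to the integer part `I` of `F`. -/
def Nset {F : Type*} [Field F] [LinearOrder F] [IsStrictOrderedRing F] (I : Subring F) (fl : F → F) (α : F) : Set F :=
  {y | ∃ n, n ∈ I ∧ 0 ≤ n ∧ y = fl (n * α)}

namespace IntegerPart

variable {F : Type*} [Field F] [LinearOrder F] [IsStrictOrderedRing F] {I : Subring F} {fl : F → F}

theorem add_one_le_of_lt (hdisc : ∀ x ∈ I, ¬(0 < x ∧ x < 1)) {a b : F} (ha : a ∈ I) (hb : b ∈ I)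
    (hab : a < b) : a + 1 ≤ b := by
  by_contra! h
  exact hdisc (b - a) (sub_mem hb ha) ⟨by linarith, by linarith⟩

theorem floor_mono (hdisc : ∀ x ∈ I, ¬(0 < x ∧ x < 1))
    (hfl : ∀ x : F, fl x ∈ I ∧ fl x ≤ x ∧ x < fl x + 1) : Monotone fl := by
  intro x y hxy
  by_contra! h
  have := add_one_le_of_lt hdisc (hfl y).1 (hfl x).1 h
  linarith [(hfl x).2.1, (hfl y).2.2]

theorem floor_nonneg (hdisc : ∀ x ∈ I, ¬(0 < x ∧ x < 1))
    (hfl : ∀ x : F, fl x ∈ I ∧ fl x ≤ x ∧ x < fl x + 1) {x : F} (hx : 0 ≤ x) : 0 ≤ fl x := by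
  have := add_one_le_of_lt hdisc (neg_mem (one_mem I)) (hfl x).1 (by linarith [(hfl x).2.2])
  linarith

theorem exists_mem_one_lt_mul_and_sub_one_mul_le (hdisc : ∀ x ∈ I, ¬(0 < x ∧ x < 1))
    (hfl : ∀ x : F, fl x ∈ I ∧ fl x ≤ x ∧ x < fl x + 1) {c : F} (hc : 0 < c) :
    ∃ n ∈ I, 0 ≤ n ∧ 1 < n * c ∧ (n - 1) * c ≤ 1 := by
  obtain ⟨hkI, hkle, hklt⟩ := hfl (1 / c)
  have hk0 : 0 ≤ fl (1 / c) := floor_nonneg hdisc hfl (by positivity)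
  refine ⟨fl (1 / c) + 1, add_mem hkI (one_mem I), by linarith, ?_, ?_⟩
  · calc 1 = 1 / c * c := by field_simp
      _ < (fl (1 / c) + 1) * c := by gcongr
  · calc (fl (1 / c) + 1 - 1) * c ≤ 1 / c * c := by gcongr; linarith
      _ = 1 := by field_simp

theorem floor_mul_notMem_Nset (hdisc : ∀ x ∈ I, ¬(0 < x ∧ x < 1))
    (hfl : ∀ x : F, fl x ∈ I ∧ fl x ≤ x ∧ x < fl x + 1) {α β n : F} (hn : n ∈ I)
    (hβ : 2 ≤ β) (hαβ : β < α) (hn_gt : 1 < n * (α - β)) (hn_le : (n - 1) * (α - β) ≤ 1) :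
    fl (n * β) ∉ Nset I fl α := by
  rintro ⟨m, hm, -, heq⟩
  have hα : 0 < α := by linarith
  have hfloor_lt : fl (m * α) < fl (n * α) := by
    linarith [(hfl (n * β)).2.1, (hfl (n * α)).2.2]
  have hmn : m < n := by
    by_contra! h
    exact hfloor_lt.not_ge (floor_mono hdisc hfl (by gcongr))
  have hm_le : m ≤ n - 1 := by linarith [add_one_le_of_lt hdisc hm hn hmn]
  have hmα : m * α ≤ (n - 1) * α := by gcongr
  linarith [(hfl (m * α)).2.1, (hfl (n * β)).2.2]

end IntegerPart

open IntegerPart in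
theorem stmt_3 {F : Type*} [Field F] [LinearOrder F] [IsStrictOrderedRing F] (I : Subring F) (fl : F → F)
    (hdisc : ∀ x ∈ I, ¬(0 < x ∧ x < 1))
    (hfl : ∀ x : F, fl x ∈ I ∧ fl x ≤ x ∧ x < fl x + 1)
    (α β : F) (hβ : 2 ≤ β) (hαβ : β < α) :
    (Nset I fl β \ Nset I fl α).Nonempty := by
  obtain ⟨n, hn, hn0, hn_gt, hn_le⟩ :=
    exists_mem_one_lt_mul_and_sub_one_mul_le hdisc hfl (sub_pos.mpr hαβ)
  exact ⟨fl (n * β), ⟨n, hn, hn0, rfl⟩, floor_mul_notMem_Nset hdisc hfl hn hβ hαβ hn_gt hn_le⟩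
end

section
/- Let F be a linearly ordered field with integer part I, let α, β ∈ F be distinct irrationals with α, β > 1, and let a, b ∈ I^{≥0} be such that a·α^{−1} + b·β^{−1} = 1. Then N_α ∩ N_β = {0}. -/
/-- An element of `F` is rational (with respect to `I`) if it lies in the
fraction field of `I` viewed inside `F`. -/
def IsRat {F : Type*} [Field F] [LinearOrder F] [IsStrictOrderedRing F] (I : Subring F) (α : F) : Prop :=
  ∃ p ∈ I, ∃ q ∈ I, q ≠ 0 ∧ α = p / q

/-!
If `y = ⌊mα⌋ = ⌊nβ⌋` with `m, n ≠ 0`, irrationality makes both `mα` and `nβ` lie strictly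
inside `(y, y + 1)`. Since `a/α + b/β = 1`, the element `am + bn = (a/α)·mα + (b/β)·nβ` of `I`
is a convex combination of them, so it also lies strictly between the consecutive elements
`y` and `y + 1` of `I`, which discreteness forbids. Hence `m = 0` or `n = 0`, and `y = ⌊0⌋ = 0`.
-/

open Set

section OrderedField

variable {F : Type*} [Field F] [LinearOrder F] [IsStrictOrderedRing F]

theorem mul_add_mul_mem_Ioo {a b α β m n y : F} (ha : 0 ≤ a) (hb : 0 ≤ b)
    (hα : 0 < α) (hβ : 0 < β) (hab : a * α⁻¹ + b * β⁻¹ = 1)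
    (hm : m * α ∈ Ioo y (y + 1)) (hn : n * β ∈ Ioo y (y + 1)) :
    a * m + b * n ∈ Ioo y (y + 1) := by
  have hcomb := convex_Ioo y (y + 1) hm hn (by positivity) (by positivity) hab
  convert hcomb using 1
  simp only [smul_eq_mul]
  field_simp

end OrderedField

namespace IntegerPart

variable {F : Type*} [Field F] [LinearOrder F] [IsStrictOrderedRing F] {I : Subring F}
  {fl : F → F}

theorem floor_zero (hdisc : ∀ x ∈ I, ¬(0 < x ∧ x < 1))
    (hfl : ∀ x : F, fl x ∈ I ∧ fl x ≤ x ∧ x < fl x + 1) : fl 0 = 0 := by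
  obtain ⟨hmem, hle, hlt⟩ := hfl 0
  have hneg_not_pos : ¬(0 < -fl 0) := fun hpos => hdisc _ (I.neg_mem hmem) ⟨hpos, by linarith⟩
  linarith

theorem mul_mem_Ioo_floor (hfl : ∀ x : F, fl x ∈ I ∧ fl x ≤ x ∧ x < fl x + 1) {α n : F}
    (hα : ¬IsRat I α) (hnI : n ∈ I) (hn : n ≠ 0) :
    n * α ∈ Ioo (fl (n * α)) (fl (n * α) + 1) := by
  obtain ⟨hmem, hle, hlt⟩ := hfl (n * α)
  refine ⟨hle.lt_of_ne fun heq => hα ⟨_, hmem, n, hnI, hn, ?_⟩, hlt⟩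
  rw [heq]
  field_simp

theorem zero_mem_Nset (hfl0 : fl 0 = 0) (α : F) : (0 : F) ∈ Nset I fl α :=
  ⟨0, I.zero_mem, le_rfl, by rw [zero_mul, hfl0]⟩

end IntegerPart

open IntegerPart

theorem stmt_8_general {F : Type*} [Field F] [LinearOrder F] [IsStrictOrderedRing F] (I : Subring F) (fl : F → F)
    (hdisc : ∀ x ∈ I, ¬(0 < x ∧ x < 1))
    (hfl : ∀ x : F, fl x ∈ I ∧ fl x ≤ x ∧ x < fl x + 1)
    (α β : F) (hα1 : 1 < α) (hβ1 : 1 < β)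
    (hαirr : ¬ IsRat I α) (hβirr : ¬ IsRat I β)
    (a b : F) (ha : a ∈ I) (hb : b ∈ I) (ha0 : 0 ≤ a) (hb0 : 0 ≤ b)
    (hab : a * α⁻¹ + b * β⁻¹ = 1) :
    Nset I fl α ∩ Nset I fl β = {0} := by
  have hfl0 := floor_zero hdisc hfl
  refine Subset.antisymm ?_ (singleton_subset_iff.2 ⟨zero_mem_Nset hfl0 α, zero_mem_Nset hfl0 β⟩)
  rintro y ⟨⟨m, hmI, -, rfl⟩, ⟨n, hnI, -, hy⟩⟩
  rcases eq_or_ne m 0 with rfl | hm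
  · rw [zero_mul, hfl0, mem_singleton_iff]
  rcases eq_or_ne n 0 with rfl | hn
  · rw [hy, zero_mul, hfl0, mem_singleton_iff]
  have hmα := mul_mem_Ioo_floor hfl hαirr hmI hm
  have hnβ := mul_mem_Ioo_floor hfl hβirr hnI hn
  rw [← hy] at hnβ
  have hmid := mul_add_mul_mem_Ioo ha0 hb0 (by linarith) (by linarith) hab hmα hnβ
  have hdiff : a * m + b * n - fl (m * α) ∈ I :=
    I.sub_mem (I.add_mem (I.mul_mem ha hmI) (I.mul_mem hb hnI)) (hfl _).1
  exact absurd ⟨sub_pos.2 hmid.1, by linarith [hmid.2]⟩ (hdisc _ hdiff)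

theorem stmt_8 {F : Type*} [Field F] [LinearOrder F] [IsStrictOrderedRing F] (I : Subring F) (fl : F → F)
    (hdisc : ∀ x ∈ I, ¬(0 < x ∧ x < 1))
    (hfl : ∀ x : F, fl x ∈ I ∧ fl x ≤ x ∧ x < fl x + 1)
    (α β : F) (hα1 : 1 < α) (hβ1 : 1 < β)
    (hαirr : ¬ IsRat I α) (hβirr : ¬ IsRat I β) (hne : α ≠ β)
    (a b : F) (ha : a ∈ I) (hb : b ∈ I) (ha0 : 0 ≤ a) (hb0 : 0 ≤ b)
    (hab : a * α⁻¹ + b * β⁻¹ = 1) :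
    Nset I fl α ∩ Nset I fl β = {0} :=
  stmt_8_general I fl hdisc hfl α β hα1 hβ1 hαirr hβirr a b ha hb ha0 hb0 hab
end

section
/- Let F be a linearly ordered field with integer part I, let α, β ∈ F be distinct irrationals with α, β > 1, and let a, b ∈ I^{≥0} be such that a·α^{−1} + b·(1 − β^{−1}) = 1. Then N_α ⊆ N_β. -/
/-!
Write `γ = 1 - β⁻¹`. For `β > 0`, an integer `m ≥ 0` lies in `N_β` as soon as some integer `j`
satisfies `(m + 1) γ - 1 < j ≤ m γ`, with witness `k = m - j`; for `j = ⌊m γ⌋` only the strict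
upper inequality can fail. Take `m = ⌊n α⌋` with `n > 0`. If `j + 1 < (m + 1) γ`, the relation
`a = α (1 - b γ)` makes `s = n a + b (j + 1)` an integer with
`s - m = (n α - m)(1 - b γ) + b (j + 1 - m γ) > 0` and
`s - m - 1 = (n α - m - 1)(1 - b γ) + b (j + 1 - (m + 1) γ) < 0`, which is impossible.
Irrationality of `α` gives `m < n α`; irrationality of `β` gives `1 - b γ > 0` and excludes the
boundary case `j + 1 = (m + 1) γ`.
-/

section IntegerPart

variable {F : Type*} [Field F] [LinearOrder F] [IsStrictOrderedRing F] {I : Subring F}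

theorem IsRat.of_mul_mem {n x : F} (hn : n ∈ I) (hn0 : n ≠ 0) (h : n * x ∈ I) : IsRat I x :=
  ⟨n * x, h, n, hn, hn0, by field_simp⟩

theorem IsRat.of_inv {x : F} (h : IsRat I x⁻¹) : IsRat I x := by
  obtain ⟨p, hp, q, hq, hq0, hx⟩ := h
  by_cases hp0 : p = 0
  · exact ⟨0, I.zero_mem, 1, I.one_mem, one_ne_zero, by simpa [hp0] using hx⟩
  · exact ⟨q, hq, p, hp, hp0, by rw [← inv_inv x, hx, inv_div]⟩

theorem add_one_le_of_lt_of_mem (hdisc : ∀ x ∈ I, ¬(0 < x ∧ x < 1)) {x y : F} (hx : x ∈ I)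
    (hy : y ∈ I) (h : x < y) : x + 1 ≤ y := by
  by_contra! h'
  exact hdisc (y - x) (I.sub_mem hy hx) ⟨by linarith, by linarith⟩

variable {fl : F → F}

theorem fl_eq_of_le_of_lt (hdisc : ∀ x ∈ I, ¬(0 < x ∧ x < 1))
    (hfl : ∀ x : F, fl x ∈ I ∧ fl x ≤ x ∧ x < fl x + 1) {c x : F} (hc : c ∈ I) (h₁ : c ≤ x)
    (h₂ : x < c + 1) : fl x = c := by
  obtain ⟨hI, hle, hlt⟩ := hfl x
  apply le_antisymm
  · by_contra! h
    linarith [add_one_le_of_lt_of_mem hdisc hc hI h]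
  · by_contra! h
    linarith [add_one_le_of_lt_of_mem hdisc hI hc h]

theorem fl_nonneg (hdisc : ∀ x ∈ I, ¬(0 < x ∧ x < 1))
    (hfl : ∀ x : F, fl x ∈ I ∧ fl x ≤ x ∧ x < fl x + 1) {x : F} (hx : 0 ≤ x) : 0 ≤ fl x := by
  obtain ⟨hI, -, hlt⟩ := hfl x
  simpa using add_one_le_of_lt_of_mem hdisc (I.neg_mem I.one_mem) hI (by linarith)

theorem mem_Nset_of_le_of_lt (hdisc : ∀ x ∈ I, ¬(0 < x ∧ x < 1))
    (hfl : ∀ x : F, fl x ∈ I ∧ fl x ≤ x ∧ x < fl x + 1) {β k m : F} (hβ : 0 < β) (hk : k ∈ I)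
    (hm : m ∈ I) (hm0 : 0 ≤ m) (h₁ : m ≤ k * β) (h₂ : k * β < m + 1) : m ∈ Nset I fl β :=
  ⟨k, hk, nonneg_of_mul_nonneg_left (hm0.trans h₁) hβ, (fl_eq_of_le_of_lt hdisc hfl hm h₁ h₂).symm⟩

theorem mem_Nset_of_mem_Ioc (hdisc : ∀ x ∈ I, ¬(0 < x ∧ x < 1))
    (hfl : ∀ x : F, fl x ∈ I ∧ fl x ≤ x ∧ x < fl x + 1) {β m j : F} (hβ : 0 < β) (hm : m ∈ I)
    (hj : j ∈ I) (hm0 : 0 ≤ m) (hjm : j ∈ Set.Ioc ((m + 1) * (1 - β⁻¹) - 1) (m * (1 - β⁻¹))) :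
    m ∈ Nset I fl β := by
  obtain ⟨h₁, h₂⟩ := hjm
  refine mem_Nset_of_le_of_lt hdisc hfl hβ (I.sub_mem hm hj) hm hm0 ?_ ?_
  · calc m = m * β⁻¹ * β := by field_simp
      _ ≤ (m - j) * β := by gcongr; linarith
  · calc (m - j) * β < (m + 1) * β⁻¹ * β := by gcongr; linarith
      _ = m + 1 := by field_simp

theorem mul_one_sub_inv_lt_one {α β a b : F} (hβ : ¬IsRat I β) (hα : 0 < α) (hb : b ∈ I)
    (ha0 : 0 ≤ a) (hab : a * α⁻¹ + b * (1 - β⁻¹) = 1) : b * (1 - β⁻¹) < 1 := by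
  have haα : 0 ≤ a * α⁻¹ := by positivity
  refine (by linarith : b * (1 - β⁻¹) ≤ 1).lt_of_ne fun h => hβ (IsRat.of_inv ?_)
  have hb0 : b ≠ 0 := by rintro rfl; simp at h
  refine IsRat.of_mul_mem hb hb0 ?_
  rw [show b * β⁻¹ = b - 1 by linear_combination -h]
  exact I.sub_mem hb I.one_mem

theorem add_one_mul_le_of_mul_lt (hdisc : ∀ x ∈ I, ¬(0 < x ∧ x < 1)) {α γ a b n m j : F}
    (hα : 0 < α) (ha : a ∈ I) (hb : b ∈ I) (hb0 : 0 ≤ b) (hbγ : b * γ < 1)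
    (hab : a * α⁻¹ + b * γ = 1) (hn : n ∈ I) (hm : m ∈ I) (hj : j ∈ I) (hm₁ : m < n * α)
    (hm₂ : n * α < m + 1) (hmj : m * γ < j + 1) : (m + 1) * γ ≤ j + 1 := by
  by_contra! h
  have ha' : a = α * (1 - b * γ) := by
    rw [← hab]; field_simp; ring
  have hs : n * a + b * (j + 1) ∈ I :=
    I.add_mem (I.mul_mem hn ha) (I.mul_mem hb (I.add_mem hj I.one_mem))
  have hs₁ : n * a + b * (j + 1) - m = (n * α - m) * (1 - b * γ) + b * (j + 1 - m * γ) := by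
    rw [ha']; ring
  have hs₂ : n * a + b * (j + 1) - (m + 1) =
      (n * α - (m + 1)) * (1 - b * γ) + b * (j + 1 - (m + 1) * γ) := by
    rw [ha']; ring
  have hms : m < n * a + b * (j + 1) := by
    have := mul_pos (sub_pos.2 hm₁) (sub_pos.2 hbγ)
    have := mul_nonneg hb0 (sub_pos.2 hmj).le
    linarith
  have hsm : n * a + b * (j + 1) < m + 1 := by
    have := mul_neg_of_neg_of_pos (sub_neg.2 hm₂) (sub_pos.2 hbγ)
    have := mul_nonpos_of_nonneg_of_nonpos hb0 (sub_neg.2 h).le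
    linarith
  linarith [add_one_le_of_lt_of_mem hdisc hm hs hms]

end IntegerPart

theorem stmt_10_general {F : Type*} [Field F] [LinearOrder F] [IsStrictOrderedRing F] (I : Subring F) (fl : F → F)
    (hdisc : ∀ x ∈ I, ¬(0 < x ∧ x < 1))
    (hfl : ∀ x : F, fl x ∈ I ∧ fl x ≤ x ∧ x < fl x + 1)
    (α β : F) (hα1 : 1 < α) (hβ1 : 1 < β)
    (hαirr : ¬ IsRat I α) (hβirr : ¬ IsRat I β)
    (a b : F) (ha : a ∈ I) (hb : b ∈ I) (ha0 : 0 ≤ a) (hb0 : 0 ≤ b)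
    (hab : a * α⁻¹ + b * (1 - β⁻¹) = 1) :
    Nset I fl α ⊆ Nset I fl β := by
  have hα0 : 0 < α := one_pos.trans hα1
  have hβ0 : 0 < β := one_pos.trans hβ1
  have hbγ := mul_one_sub_inv_lt_one hβirr hα0 hb ha0 hab
  rintro _ ⟨n, hn, hn0, rfl⟩
  rcases hn0.eq_or_lt with rfl | hn0
  · exact ⟨0, I.zero_mem, le_rfl, by simp⟩
  obtain ⟨hm, hm₁, hm₂⟩ := hfl (n * α)
  obtain ⟨hj, hjm, hmj⟩ := hfl (fl (n * α) * (1 - β⁻¹))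
  set m := fl (n * α)
  set j := fl (m * (1 - β⁻¹))
  have hm0 : 0 ≤ m := fl_nonneg hdisc hfl (mul_pos hn0 hα0).le
  replace hm₁ : m < n * α :=
    hm₁.lt_of_ne fun h => hαirr (IsRat.of_mul_mem hn hn0.ne' (h ▸ hm))
  have hle := add_one_mul_le_of_mul_lt hdisc hα0 ha hb hb0 hbγ hab hn hm hj hm₁ hm₂ hmj
  refine mem_Nset_of_mem_Ioc hdisc hfl hβ0 hm hj hm0
    ⟨sub_lt_iff_lt_add.2 (hle.lt_of_ne fun h => ?_), hjm⟩
  refine hβirr (IsRat.of_inv (IsRat.of_mul_mem (I.add_mem hm I.one_mem) (by positivity) ?_))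
  rw [show (m + 1) * β⁻¹ = m - j by linear_combination -h]
  exact I.sub_mem hm hj

theorem stmt_10 {F : Type*} [Field F] [LinearOrder F] [IsStrictOrderedRing F] (I : Subring F) (fl : F → F)
    (hdisc : ∀ x ∈ I, ¬(0 < x ∧ x < 1))
    (hfl : ∀ x : F, fl x ∈ I ∧ fl x ≤ x ∧ x < fl x + 1)
    (α β : F) (hα1 : 1 < α) (hβ1 : 1 < β)
    (hαirr : ¬ IsRat I α) (hβirr : ¬ IsRat I β) (hne : α ≠ β)
    (a b : F) (ha : a ∈ I) (hb : b ∈ I) (ha0 : 0 ≤ a) (hb0 : 0 ≤ b)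
    (hab : a * α⁻¹ + b * (1 - β⁻¹) = 1) :
    Nset I fl α ⊆ Nset I fl β :=
  stmt_10_general I fl hdisc hfl α β hα1 hβ1 hαirr hβirr a b ha hb ha0 hb0 hab
end

section
/- Let F be a linearly ordered field with integer part I satisfying the ℙ property: for every irrational γ ∈ F with γ > 1 and every m ∈ I^{>0}, k ∈ I^{≥0}, the set N_γ ∩ (mI^{≥0} + k) contains a nonzero element. Let α ∈ F be irrational with α > 1 and let ρ ∈ F be rational with ρ > 1. Then none of the following holds: N_α ⊆ N_ρ; N_ρ ⊆ N_α; N_α ∩ N_ρ = {0}; N_α ∪ N_ρ = I^{≥0}. -/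
/-- `I^{≥0}`: the nonnegative elements of `I`. -/
def Inonneg {F : Type*} [Field F] [LinearOrder F] [IsStrictOrderedRing F] (I : Subring F) : Set F :=
  {n | n ∈ I ∧ 0 ≤ n}

/-- The arithmetic progression `m·I^{≥0} + k = {m·t + k : t ∈ I, t ≥ 0}`. -/
def AP {F : Type*} [Field F] [LinearOrder F] [IsStrictOrderedRing F] (I : Subring F) (m k : F) : Set F :=
  {y | ∃ t, t ∈ I ∧ 0 ≤ t ∧ y = m * t + k}

/-! Write `ρ = p/q` with `q > 0`. Then `N_ρ` contains every multiple of `p` but no element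
`p s - 1` with `s ≥ 1`, since `⌊nρ⌋` cannot land just below a multiple of `p`. Applying the ℙ property
to `α` and to its Beatty partner `β = α/(α-1)` in the progressions `pI^{≥0}` and `pI^{≥0} + (p-1)`
refutes each of the four relations, using Beatty's theorem that `N_α` and `N_β` meet only in `0`. -/

section IntegerPart

variable {F : Type*} [Field F] [LinearOrder F] [IsStrictOrderedRing F] {I : Subring F}
  {fl : F → F}

theorem IsRat.exists_pos_den {ρ : F} (h : IsRat I ρ) : ∃ p ∈ I, ∃ q ∈ I, 0 < q ∧ ρ = p / q := by
  obtain ⟨p, hp, q, hq, hq0, rfl⟩ := h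
  rcases hq0.lt_or_gt with hneg | hpos
  · exact ⟨-p, I.neg_mem hp, -q, I.neg_mem hq, neg_pos.mpr hneg, (neg_div_neg_eq p q).symm⟩
  · exact ⟨p, hp, q, hq, hpos, rfl⟩

theorem IsRat.div_sub_one {x : F} (h : IsRat I x) : IsRat I (x / (x - 1)) := by
  obtain ⟨p, hp, q, hq, hq0, rfl⟩ := h
  by_cases hpq : p = q
  · subst hpq
    exact ⟨0, I.zero_mem, 1, I.one_mem, one_ne_zero, by simp [div_self hq0]⟩
  · have hpq' : p - q ≠ 0 := sub_ne_zero.mpr hpq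
    refine ⟨p, hp, p - q, I.sub_mem hp hq, hpq', ?_⟩
    rw [_root_.div_sub_one hq0, div_div_div_cancel_right₀ hq0]

theorem exists_not_isRat_inv_add_inv_eq_one {α : F} (hα : ¬ IsRat I α) (hα1 : 1 < α) :
    ∃ β, 1 < β ∧ ¬ IsRat I β ∧ α⁻¹ + β⁻¹ = 1 := by
  have hα0 : α - 1 ≠ 0 := (sub_pos.mpr hα1).ne'
  refine ⟨α / (α - 1), ?_, fun hβ => hα ?_, ?_⟩
  · rw [lt_div_iff₀ (sub_pos.mpr hα1)]
    linarith
  · convert hβ.div_sub_one using 1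
    field_simp
    ring
  · field_simp
    ring

theorem add_one_le_of_lt_of_discrete (hdisc : ∀ x ∈ I, ¬(0 < x ∧ x < 1)) {a b : F} (ha : a ∈ I)
    (hb : b ∈ I) (hab : a < b) : a + 1 ≤ b := by
  by_contra! h
  exact hdisc (b - a) (I.sub_mem hb ha) ⟨by linarith, by linarith⟩

theorem floor_eq_self (hdisc : ∀ x ∈ I, ¬(0 < x ∧ x < 1))
    (hfl : ∀ x : F, fl x ∈ I ∧ fl x ≤ x ∧ x < fl x + 1) {x : F} (hx : x ∈ I) : fl x = x := by
  obtain ⟨hI, hle, hlt⟩ := hfl x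
  refine le_antisymm hle (not_lt.mp fun h => ?_)
  linarith [add_one_le_of_lt_of_discrete hdisc hI hx h]

theorem floor_mul_lt_of_not_isRat (hfl : ∀ x : F, fl x ∈ I ∧ fl x ≤ x ∧ x < fl x + 1) {m α : F}
    (hm : m ∈ I) (hm0 : m ≠ 0) (hα : ¬ IsRat I α) : fl (m * α) < m * α :=
  (hfl _).2.1.lt_of_ne fun h =>
    hα ⟨fl (m * α), (hfl _).1, m, hm, hm0, by rw [eq_div_iff hm0, h, mul_comm]⟩

theorem Nset_subset_Inonneg (hdisc : ∀ x ∈ I, ¬(0 < x ∧ x < 1))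
    (hfl : ∀ x : F, fl x ∈ I ∧ fl x ≤ x ∧ x < fl x + 1) {γ : F} (hγ : 0 ≤ γ) :
    Nset I fl γ ⊆ Inonneg I := by
  rintro _ ⟨n, -, hn, rfl⟩
  obtain ⟨hI, -, hlt⟩ := hfl (n * γ)
  refine ⟨hI, not_lt.mp fun h => ?_⟩
  have := add_one_le_of_lt_of_discrete hdisc hI I.zero_mem h
  nlinarith

theorem AP_zero_subset_Nset (hdisc : ∀ x ∈ I, ¬(0 < x ∧ x < 1))
    (hfl : ∀ x : F, fl x ∈ I ∧ fl x ≤ x ∧ x < fl x + 1) {p q ρ : F} (hp : p ∈ I) (hq : q ∈ I)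
    (hq0 : 0 < q) (hρ : ρ = p / q) : AP I p 0 ⊆ Nset I fl ρ := by
  rintro _ ⟨t, ht, ht0, rfl⟩
  refine ⟨q * t, I.mul_mem hq ht, by positivity, ?_⟩
  have : q * t * ρ = p * t := by
    rw [hρ]
    field_simp
  rw [this, floor_eq_self hdisc hfl (I.mul_mem hp ht), add_zero]

/-- If `⌊nρ⌋ = p(t+1) - 1` then `n` would lie strictly between `q(t+1) - 1` and `q(t+1)`. -/
theorem disjoint_AP_sub_one_Nset (hdisc : ∀ x ∈ I, ¬(0 < x ∧ x < 1))
    (hfl : ∀ x : F, fl x ∈ I ∧ fl x ≤ x ∧ x < fl x + 1) {p q ρ : F} (hq : q ∈ I) (hq0 : 0 < q)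
    (hρ : ρ = p / q) (hρ1 : 1 < ρ) : Disjoint (AP I p (p - 1)) (Nset I fl ρ) := by
  rw [Set.disjoint_left]
  rintro _ ⟨t, ht, ht0, rfl⟩ ⟨n, hn, -, hy⟩
  obtain ⟨-, hle, hlt⟩ := hfl (n * ρ)
  rw [← hy] at hle hlt
  have hnρ : n * ρ * q = n * p := by rw [hρ]; field_simp
  have hqp : q < p := by rwa [hρ, one_lt_div hq0] at hρ1
  have hs : n < q * (t + 1) := by nlinarith
  have := add_one_le_of_lt_of_discrete hdisc hn (I.mul_mem hq (I.add_mem ht I.one_mem)) hs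
  nlinarith

/-- Beatty's theorem: with `fl (m * α) = y`, `y < m * α < y + 1` forces `m ∈ (y/α, (y+1)/α)`, and the
two such intervals for `α` and `β` add up to `(y, y+1)`, which contains no element of `I`. -/
theorem Nset_inter_Nset_subset_zero (hdisc : ∀ x ∈ I, ¬(0 < x ∧ x < 1))
    (hfl : ∀ x : F, fl x ∈ I ∧ fl x ≤ x ∧ x < fl x + 1) {α β : F} (hα0 : 0 < α) (hβ0 : 0 < β)
    (hα : ¬ IsRat I α) (hβ : ¬ IsRat I β) (hαβ : α⁻¹ + β⁻¹ = 1) :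
    Nset I fl α ∩ Nset I fl β ⊆ {0} := by
  rintro y ⟨⟨m, hm, -, hym⟩, ⟨n, hn, -, hyn⟩⟩
  by_contra hy0
  have hm0 : m ≠ 0 := by rintro rfl; simp [floor_eq_self hdisc hfl I.zero_mem] at hym; exact hy0 hym
  have hn0 : n ≠ 0 := by rintro rfl; simp [floor_eq_self hdisc hfl I.zero_mem] at hyn; exact hy0 hyn
  have hmα := floor_mul_lt_of_not_isRat hfl hm hm0 hα
  have hnβ := floor_mul_lt_of_not_isRat hfl hn hn0 hβ
  rw [← hym] at hmα
  rw [← hyn] at hnβ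
  have hmα' := (hfl (m * α)).2.2
  have hnβ' := (hfl (n * β)).2.2
  rw [← hym] at hmα'
  rw [← hyn] at hnβ'
  have h1 : y / α < m := by rwa [div_lt_iff₀ hα0]
  have h2 : y / β < n := by rwa [div_lt_iff₀ hβ0]
  have h3 : m < (y + 1) / α := by rwa [lt_div_iff₀ hα0]
  have h4 : n < (y + 1) / β := by rwa [lt_div_iff₀ hβ0]
  have hsplit : ∀ z : F, z / α + z / β = z := fun z => by
    rw [div_eq_mul_inv, div_eq_mul_inv, ← mul_add, hαβ, mul_one]
  have hyI : y ∈ I := hym ▸ (hfl _).1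
  have := add_one_le_of_lt_of_discrete hdisc hyI (I.add_mem hm hn)
    (by linarith [hsplit y])
  linarith [hsplit (y + 1)]

end IntegerPart

theorem stmt_17 {F : Type*} [Field F] [LinearOrder F] [IsStrictOrderedRing F] (I : Subring F) (fl : F → F)
    (hdisc : ∀ x ∈ I, ¬(0 < x ∧ x < 1))
    (hfl : ∀ x : F, fl x ∈ I ∧ fl x ≤ x ∧ x < fl x + 1)
    (hP : ∀ γ : F, ¬ IsRat I γ → 1 < γ → ∀ m ∈ I, 0 < m → ∀ k ∈ I, 0 ≤ k →
        ∃ y ∈ Nset I fl γ ∩ AP I m k, y ≠ 0)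
    (α : F) (hαirr : ¬ IsRat I α) (hα1 : 1 < α)
    (ρ : F) (hρrat : IsRat I ρ) (hρ1 : 1 < ρ) :
    ¬ (Nset I fl α ⊆ Nset I fl ρ) ∧
    ¬ (Nset I fl ρ ⊆ Nset I fl α) ∧
    Nset I fl α ∩ Nset I fl ρ ≠ {0} ∧
    Nset I fl α ∪ Nset I fl ρ ≠ Inonneg I := by
  obtain ⟨p, hp, q, hq, hq0, hρ⟩ := hρrat.exists_pos_den
  obtain ⟨β, hβ1, hβirr, hαβ⟩ := exists_not_isRat_inv_add_inv_eq_one hαirr hα1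
  have hp0 : 0 < p := by
    have := (one_lt_div hq0).mp (hρ ▸ hρ1)
    linarith
  have hp1 : 0 ≤ p - 1 := by linarith [add_one_le_of_lt_of_discrete hdisc I.zero_mem hp hp0]
  have hp1I : p - 1 ∈ I := I.sub_mem hp I.one_mem
  have hmul := AP_zero_subset_Nset hdisc hfl hp hq hq0 hρ (fl := fl)
  have hoff := Set.disjoint_left.mp (disjoint_AP_sub_one_Nset hdisc hfl hq hq0 hρ hρ1)
  have hbeatty := Nset_inter_Nset_subset_zero hdisc hfl (by linarith) (by linarith) hαirr hβirr hαβ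
  refine ⟨fun hsub => ?_, fun hsub => ?_, fun hinter => ?_, fun hunion => ?_⟩
  · obtain ⟨y, ⟨hyα, hyAP⟩, -⟩ := hP α hαirr hα1 p hp hp0 (p - 1) hp1I hp1
    exact hoff hyAP (hsub hyα)
  · obtain ⟨y, ⟨hyβ, hyAP⟩, hy0⟩ := hP β hβirr hβ1 p hp hp0 0 I.zero_mem le_rfl
    exact hy0 (hbeatty ⟨hsub (hmul hyAP), hyβ⟩)
  · obtain ⟨y, ⟨hyα, hyAP⟩, hy0⟩ := hP α hαirr hα1 p hp hp0 0 I.zero_mem le_rfl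
    exact hy0 (hinter ▸ ⟨hyα, hmul hyAP⟩ : y ∈ ({0} : Set F))
  · obtain ⟨y, ⟨hyβ, hyAP⟩, hy0⟩ := hP β hβirr hβ1 p hp hp0 (p - 1) hp1I hp1
    rcases hunion ▸ Nset_subset_Inonneg hdisc hfl (by linarith) hyβ with hyα | hyρ
    · exact hy0 (hbeatty ⟨hyα, hyβ⟩)
    · exact hoff hyAP hyρ
end
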